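/- Let (X,μ) be a connected weighted graph with bounded row sums and convergence parameter R_μ, let λ > R_μ, and let (x_0,y_0), (x_1,y_1), …, (x_l,y_l) be a finite collection of pairs of vertices of X. Then there exists t = t(λ) > 0 such that e^{−t} ∑_{n=0}^∞ μ^{(n)}(x_j,y_j) (λt)^n / n! > 1 for every j = 0,1,…,l; that is, the expected number of particles at y_j at time t of the λ-branching random walk started from one particle at x_j exceeds 1 simultaneously for all j. -/

import Mathlib

open Filter MeasureTheory ProbabilityTheory
open scoped ENNReal NNReal

/-- `n`-step weights (matrix powers) of a weight kernel `μ` on a countable set. -/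
noncomputable def matPow {X : Type*} [DecidableEq X] (μ : X → X → ℝ≥0∞) :
    ℕ → X → X → ℝ≥0∞
  | 0, x, y => if x = y then 1 else 0
  | n + 1, x, y => ∑' z, matPow μ n x z * μ z y

/-- `(X, μ)` has bounded row sums. -/
def bddRows {X : Type*} (μ : X → X → ℝ≥0∞) : Prop :=
  ∃ K : ℝ≥0∞, K ≠ ⊤ ∧ ∀ x, ∑' y, μ x y ≤ K

/-- `(X, μ)` is connected. -/
def connectedW {X : Type*} [DecidableEq X] (μ : X → X → ℝ≥0∞) : Prop :=
  ∀ x y, ∃ n, 0 < n ∧ 0 < matPow μ n x y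

/-- `limsup_n (μ^{(n)}(x,y))^{1/n}`, the reciprocal of the convergence parameter. -/
noncomputable def lsRoot {X : Type*} [DecidableEq X] (μ : X → X → ℝ≥0∞) (x y : X) : ℝ≥0∞ :=
  Filter.limsup (fun n : ℕ => matPow μ n x y ^ (n : ℝ)⁻¹) Filter.atTop

/-- The convergence parameter `R = 1 / limsup_n (μ^{(n)}(x,y))^{1/n}`. -/
noncomputable def convR {X : Type*} [DecidableEq X] (μ : X → X → ℝ≥0∞) (x y : X) : ℝ≥0∞ :=
  (lsRoot μ x y)⁻¹

open Classical in
/-- Restriction of a weight kernel to a subset (extended by `0`). -/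
noncomputable def restrictW {X : Type*} (μ : X → X → ℝ≥0∞) (A : Set X) : X → X → ℝ≥0∞ :=
  fun x y => if x ∈ A ∧ y ∈ A then μ x y else 0

/-!
Write `P_t(x, y) = e^{-t} exp(λ t μ)(x, y)` for the expected number of particles. Multiplying the
exponential series (Cauchy product) and using `μ^{(m)}(x,z) μ^{(n)}(z,y) ≤ μ^{(m+n)}(x,y)` gives the
Chapman–Kolmogorov inequality `P_s(x,z) P_t(z,y) ≤ P_{s+t}(x,y)`, and connectedness makes every
`P_1(x,y)` positive. Since `λ > R_μ`, pick `r` with `1/λ < r < limsup_n μ^{(n)}(a,a)^{1/n}`: then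
`μ^{(n)}(a,a) ≥ r^n` for infinitely many `n`, and for those the `n`-th term of the series at time
`t = n` gives, by Stirling, `P_n(a,a) ≥ (λr)^n / (e n) → ∞`. Finally
`P_{t+2}(x_j,y_j) ≥ P_1(x_j,a) P_t(a,a) P_1(a,y_j)`, which exceeds `1` for all `j` once `t` is large.
-/

open Finset Topology
open scoped Nat

theorem inv_factorial_mul_inv_factorial (k l : ℕ) :
    ((k ! : ℝ≥0∞))⁻¹ * ((l ! : ℝ≥0∞))⁻¹ = (k + l).choose k * (((k + l)! : ℝ≥0∞))⁻¹ := by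
  have hc : ((k + l).choose k : ℝ≥0∞) ≠ 0 := by exact_mod_cast (Nat.choose_pos (by omega)).ne'
  have hfac : (((k + l)! : ℕ) : ℝ≥0∞) = (k + l).choose k * (k ! * l ! : ℕ) := by
    rw [Nat.choose_symm_add, ← Nat.add_choose_mul_factorial_mul_factorial, mul_assoc]
    push_cast; ring
  rw [hfac, ENNReal.mul_inv (.inl hc) (.inl (ENNReal.natCast_ne_top _)), ← mul_assoc,
    ENNReal.mul_inv_cancel hc (ENNReal.natCast_ne_top _), one_mul, Nat.cast_mul,
    ENNReal.mul_inv (by simp) (by simp)]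

theorem ENNReal.tsum_mul_tsum_eq_tsum_sum_antidiagonal (f g : ℕ → ℝ≥0∞) :
    (∑' n, f n) * ∑' n, g n = ∑' n, ∑ kl ∈ antidiagonal n, f kl.1 * g kl.2 := by
  rw [← ENNReal.tsum_mul_right]
  simp_rw [← ENNReal.tsum_mul_left]
  rw [← ENNReal.tsum_prod, ← Finset.HasAntidiagonal.sigmaAntidiagonalEquivProd.tsum_eq,
    ENNReal.tsum_sigma']
  congr 1; ext n
  exact Finset.tsum_subtype _ (fun kl : ℕ × ℕ => f kl.1 * g kl.2)

theorem factorial_mul_exp_le {n : ℕ} (hn : n ≠ 0) :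
    (n ! : ℝ) * Real.exp n ≤ Real.exp 1 * n * n ^ n := by
  obtain ⟨m, rfl⟩ := Nat.exists_eq_succ_of_ne_zero hn
  have hseq : Stirling.stirlingSeq (m + 1) ≤ Real.exp 1 / √2 :=
    Stirling.stirlingSeq_one ▸ Stirling.stirlingSeq'_antitone (Nat.zero_le m)
  have hsqrt : √((m + 1 : ℕ) : ℝ) ≤ (m + 1 : ℕ) := Real.sqrt_le_self_iff.mpr (.inr (by simp))
  rw [Stirling.stirlingSeq, div_le_iff₀ (by positivity), Real.sqrt_mul zero_le_two, div_pow,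
    ← Real.exp_nat_mul, mul_one] at hseq
  calc ((m + 1)! : ℝ) * Real.exp (m + 1 : ℕ)
      ≤ Real.exp 1 * √((m + 1 : ℕ) : ℝ) * (m + 1 : ℕ) ^ (m + 1) := by
        rw [← le_div_iff₀ (by positivity)]
        convert hseq using 1
        field_simp
    _ ≤ Real.exp 1 * (m + 1 : ℕ) * (m + 1 : ℕ) ^ (m + 1) := by gcongr

theorem tendsto_pow_div_mul_atTop {ρ : ℝ} (hρ : 1 < ρ) (c : ℝ) (hc : 0 < c) :
    Tendsto (fun n : ℕ => ρ ^ n / (c * n)) atTop atTop := by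
  have hdecay : Tendsto (fun n : ℕ => (n : ℝ) / ρ ^ n) atTop (𝓝[>] 0) :=
    tendsto_nhdsWithin_iff.mpr ⟨by simpa using tendsto_pow_const_div_const_pow_of_one_lt 1 hρ,
      (eventually_ne_atTop 0).mono fun n hn => Set.mem_Ioi.mpr (by
        have := zero_lt_one.trans hρ; positivity)⟩
  refine (hdecay.inv_tendsto_nhdsGT_zero.atTop_div_const hc).congr fun n => ?_
  simp only [Pi.inv_apply, inv_div, div_div, mul_comm]

section MatrixExponential

variable {X : Type*} [DecidableEq X] (μ : X → X → ℝ≥0∞)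

theorem matPow_add (m n : ℕ) (x y : X) :
    matPow μ (m + n) x y = ∑' z, matPow μ m x z * matPow μ n z y := by
  induction n generalizing y with
  | zero =>
    rw [Nat.add_zero, tsum_eq_single y fun z hz => by simp [matPow, hz]]
    simp [matPow]
  | succ n ih =>
    calc matPow μ (m + n + 1) x y
        = ∑' w, ∑' z, matPow μ m x z * matPow μ n z w * μ w y := by
          simp only [matPow, ih, ENNReal.tsum_mul_right]
      _ = ∑' z, matPow μ m x z * matPow μ (n + 1) z y := by
          rw [ENNReal.tsum_comm]
          simp only [matPow, mul_assoc, ENNReal.tsum_mul_left]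

theorem matPow_mul_matPow_le (m n : ℕ) (x z y : X) :
    matPow μ m x z * matPow μ n z y ≤ matPow μ (m + n) x y :=
  (matPow_add μ m n x y).symm ▸ ENNReal.le_tsum z

noncomputable def matExp (u : ℝ≥0∞) (x y : X) : ℝ≥0∞ :=
  ∑' n : ℕ, matPow μ n x y * u ^ n / (n ! : ℝ≥0∞)

theorem matExp_mul_matExp_le (u v : ℝ≥0∞) (x z y : X) :
    matExp μ u x z * matExp μ v z y ≤ matExp μ (u + v) x y := by
  rw [matExp, matExp, ENNReal.tsum_mul_tsum_eq_tsum_sum_antidiagonal]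
  refine ENNReal.tsum_le_tsum fun N => ?_
  rw [(Commute.all u v).add_pow', div_eq_mul_inv, Finset.mul_sum, Finset.sum_mul]
  refine Finset.sum_le_sum fun kl hkl => ?_
  obtain rfl := mem_antidiagonal.mp hkl
  calc matPow μ kl.1 x z * u ^ kl.1 / (kl.1 ! : ℝ≥0∞) * (matPow μ kl.2 z y * v ^ kl.2 / kl.2 !)
      = matPow μ kl.1 x z * matPow μ kl.2 z y * (u ^ kl.1 * v ^ kl.2) *
          ((kl.1 ! : ℝ≥0∞)⁻¹ * (kl.2 ! : ℝ≥0∞)⁻¹) := by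
        simp only [div_eq_mul_inv]; ring
    _ ≤ matPow μ (kl.1 + kl.2) x y * (u ^ kl.1 * v ^ kl.2) *
          ((kl.1 ! : ℝ≥0∞)⁻¹ * (kl.2 ! : ℝ≥0∞)⁻¹) := by
        gcongr; exact matPow_mul_matPow_le μ _ _ x z y
    _ = _ := by rw [inv_factorial_mul_inv_factorial, nsmul_eq_mul]; ring

theorem matExp_pos {u : ℝ≥0∞} (hu : u ≠ 0) {n : ℕ} {x y : X} (h : 0 < matPow μ n x y) :
    0 < matExp μ u x y :=
  lt_of_lt_of_le (ENNReal.div_pos (mul_ne_zero h.ne' (pow_ne_zero n hu))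
    (ENNReal.natCast_ne_top _)) (ENNReal.le_tsum n)

end MatrixExponential

section ExpectedParticles

variable {X : Type*} [DecidableEq X] (μ : X → X → ℝ≥0∞) {lam : ℝ}

/-- Expected number of particles at `y` at time `t` of the `lam`-branching random walk started
from one particle at `x`. -/
noncomputable def expectedParticles (lam t : ℝ) (x y : X) : ℝ≥0∞ :=
  ENNReal.ofReal (Real.exp (-t)) * matExp μ (ENNReal.ofReal (lam * t)) x y

theorem expectedParticles_mul_le (hlam : 0 ≤ lam) {s t : ℝ} (hs : 0 ≤ s) (ht : 0 ≤ t)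
    (x z y : X) :
    expectedParticles μ lam s x z * expectedParticles μ lam t z y ≤
      expectedParticles μ lam (s + t) x y := by
  have hdecay : ENNReal.ofReal (Real.exp (-(s + t))) =
      ENNReal.ofReal (Real.exp (-s)) * ENNReal.ofReal (Real.exp (-t)) := by
    rw [neg_add, Real.exp_add, ENNReal.ofReal_mul (Real.exp_pos _).le]
  have hrate : ENNReal.ofReal (lam * (s + t)) =
      ENNReal.ofReal (lam * s) + ENNReal.ofReal (lam * t) := by
    rw [mul_add, ENNReal.ofReal_add (by positivity) (by positivity)]
  calc expectedParticles μ lam s x z * expectedParticles μ lam t z y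
      = ENNReal.ofReal (Real.exp (-s)) * ENNReal.ofReal (Real.exp (-t)) *
          (matExp μ (ENNReal.ofReal (lam * s)) x z * matExp μ (ENNReal.ofReal (lam * t)) z y) := by
        simp only [expectedParticles]; ring
    _ ≤ expectedParticles μ lam (s + t) x y := by
        rw [expectedParticles, hdecay, hrate]
        gcongr
        exact matExp_mul_matExp_le μ _ _ x z y

theorem expectedParticles_pos (hlam : 0 < lam) {t : ℝ} (ht : 0 < t) {n : ℕ} {x y : X}
    (h : 0 < matPow μ n x y) : 0 < expectedParticles μ lam t x y :=
  ENNReal.mul_pos (ENNReal.ofReal_pos.mpr (Real.exp_pos _)).ne'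
    (matExp_pos μ (ENNReal.ofReal_pos.mpr (by positivity)).ne' h).ne'

theorem ofReal_pow_div_le_expectedParticles (hlam : 0 ≤ lam) {r : ℝ} (hr : 0 ≤ r) {n : ℕ}
    (hn : n ≠ 0) {x y : X} (h : ENNReal.ofReal r ^ n ≤ matPow μ n x y) :
    ENNReal.ofReal ((lam * r) ^ n / (Real.exp 1 * n)) ≤ expectedParticles μ lam n x y := by
  have hreal : (lam * r) ^ n / (Real.exp 1 * n) ≤
      Real.exp (-n) * (r ^ n * (lam * n) ^ n / n !) := by
    have hinv : 1 / (Real.exp 1 * n) ≤ n ^ n / (n ! * Real.exp n) := by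
      rw [div_le_div_iff₀ (by positivity) (by positivity), one_mul]
      linarith [factorial_mul_exp_le hn]
    calc (lam * r) ^ n / (Real.exp 1 * n) = (lam * r) ^ n * (1 / (Real.exp 1 * n)) := by ring
      _ ≤ (lam * r) ^ n * (n ^ n / (n ! * Real.exp n)) := by gcongr
      _ = Real.exp (-n) * (r ^ n * (lam * n) ^ n / n !) := by
        rw [Real.exp_neg]; field_simp; ring
  calc ENNReal.ofReal ((lam * r) ^ n / (Real.exp 1 * n))
      ≤ ENNReal.ofReal (Real.exp (-n) * (r ^ n * (lam * n) ^ n / n !)) :=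
        ENNReal.ofReal_le_ofReal hreal
    _ = ENNReal.ofReal (Real.exp (-n)) *
          (ENNReal.ofReal r ^ n * ENNReal.ofReal (lam * n) ^ n / (n ! : ℝ≥0∞)) := by
        rw [ENNReal.ofReal_mul (Real.exp_pos _).le, ENNReal.ofReal_div_of_pos (by positivity),
          ENNReal.ofReal_mul (by positivity), ENNReal.ofReal_pow hr,
          ENNReal.ofReal_pow (by positivity), ENNReal.ofReal_natCast]
    _ ≤ ENNReal.ofReal (Real.exp (-n)) *
          (matPow μ n x y * ENNReal.ofReal (lam * n) ^ n / (n ! : ℝ≥0∞)) := by gcongr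
    _ ≤ expectedParticles μ lam n x y := by
        rw [expectedParticles, matExp]; gcongr; exact ENNReal.le_tsum n

end ExpectedParticles

theorem exists_lt_expectedParticles {X : Type*} [DecidableEq X] (μ : X → X → ℝ≥0∞) {lam : ℝ}
    (hlam : 0 < lam) {a b : X} (h : convR μ a b < ENNReal.ofReal lam) {M : ℝ≥0∞} (hM : M ≠ ⊤) :
    ∃ t : ℝ, 0 < t ∧ M < expectedParticles μ lam t a b := by
  obtain ⟨r, hr0, hlam_r, hr⟩ :=
    ENNReal.lt_iff_exists_real_btwn.mp (ENNReal.inv_lt_iff_inv_lt.mp h)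
  have hgrowth : 1 < lam * r := by
    rw [← ENNReal.ofReal_inv_of_pos hlam, ENNReal.ofReal_lt_ofReal_iff'] at hlam_r
    simpa [hlam.ne'] using mul_lt_mul_of_pos_left hlam_r.1 hlam
  have hfreq : ∃ᶠ n : ℕ in atTop, ENNReal.ofReal r < matPow μ n a b ^ (n : ℝ)⁻¹ :=
    frequently_lt_of_lt_limsup (by isBoundedDefault) hr
  obtain ⟨n, hn, hMn, hn0⟩ := (hfreq.and_eventually
    (((tendsto_pow_div_mul_atTop hgrowth _ (Real.exp_pos 1)).eventually_gt_atTop M.toReal).and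
      (eventually_ne_atTop 0))).exists
  have hpow : ENNReal.ofReal r ^ n ≤ matPow μ n a b := by
    have := (ENNReal.lt_rpow_inv_iff (by positivity)).mp hn
    exact_mod_cast this.le
  exact ⟨n, by positivity, ((ENNReal.lt_ofReal_iff_toReal_lt hM).mpr hMn).trans_le
    (ofReal_pow_div_le_expectedParticles μ hlam.le hr0 hn0 hpow)⟩

theorem exists_time_expected_particles_gt_one_general
    {X : Type*} [DecidableEq X]
    (μ : X → X → ℝ≥0∞) (hconn : connectedW μ)
    (lam : ℝ) (hlam : 0 < lam)
    (hsup : ∀ a b : X, convR μ a b < ENNReal.ofReal lam)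
    (l : ℕ) (xs ys : Fin (l + 1) → X) :
    ∃ t : ℝ, 0 < t ∧ ∀ j : Fin (l + 1),
      1 < ENNReal.ofReal (Real.exp (-t)) *
        ∑' n : ℕ, matPow μ n (xs j) (ys j) * ENNReal.ofReal (lam * t) ^ n /
          (Nat.factorial n : ℝ≥0∞) := by
  have hpos : ∀ x y, 0 < expectedParticles μ lam 1 x y := fun x y =>
    expectedParticles_pos μ hlam one_pos (hconn x y).choose_spec.2
  set a := xs 0
  set w : Fin (l + 1) → ℝ≥0∞ := fun j =>
    expectedParticles μ lam 1 (xs j) a * expectedParticles μ lam 1 a (ys j)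
  have hw : ∀ j, w j ≠ 0 := fun j => (ENNReal.mul_pos (hpos _ _).ne' (hpos _ _).ne').ne'
  obtain ⟨t, ht, hlarge⟩ := exists_lt_expectedParticles μ hlam (hsup a a) (M := ∑ j, (w j)⁻¹)
    (ENNReal.sum_ne_top.mpr fun j _ => ENNReal.inv_ne_top.mpr (hw j))
  refine ⟨1 + t + 1, by positivity, fun j => ?_⟩
  calc 1 < expectedParticles μ lam t a a * w j := by
        have hinv : 1 / w j < expectedParticles μ lam t a a :=
          (one_div (w j)).symm ▸ (single_le_sum (fun i _ => zero_le) (mem_univ j)).trans_lt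
            hlarge
        exact (ENNReal.div_lt_iff (.inl (hw j)) (.inr ENNReal.one_ne_top)).mp hinv
    _ = expectedParticles μ lam 1 (xs j) a * expectedParticles μ lam t a a *
          expectedParticles μ lam 1 a (ys j) := by ring
    _ ≤ expectedParticles μ lam (1 + t + 1) (xs j) (ys j) :=
        (mul_le_mul_left (expectedParticles_mul_le μ hlam.le zero_le_one ht.le _ _ _) _).trans
          (expectedParticles_mul_le μ hlam.le (by positivity) zero_le_one _ _ _)

/-- Lemma 5.4: on a connected weighted graph with bounded row sums, if
`λ > R_μ`, then for any finite collection of pairs `(x_j, y_j)` there is a common time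
`t > 0` at which the expected number of particles at `y_j` (starting from one particle
at `x_j`) exceeds `1` for every `j`. -/
theorem exists_time_expected_particles_gt_one
    {X : Type*} [Countable X] [DecidableEq X]
    (μ : X → X → ℝ≥0∞) (hbdd : bddRows μ) (hconn : connectedW μ)
    (lam : ℝ) (hlam : 0 < lam)
    (hsup : ∀ a b : X, convR μ a b < ENNReal.ofReal lam)
    (l : ℕ) (xs ys : Fin (l + 1) → X) :
    ∃ t : ℝ, 0 < t ∧ ∀ j : Fin (l + 1),
      1 < ENNReal.ofReal (Real.exp (-t)) *
        ∑' n : ℕ, matPow μ n (xs j) (ys j) * ENNReal.ofReal (lam * t) ^ n /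
          (Nat.factorial n : ℝ≥0∞) :=
  exists_time_expected_particles_gt_one_general μ hconn lam hlam hsup l xs ys
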